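/- arXiv:1611.01990 — 2 statements merged into one kernel-verified Lean document; each statement's English description precedes it below -/
import Mathlib

section
/- In finite dimensions: let W, A ∈ ℝ^{n×n} with W symmetric positive semidefinite, A symmetric positive definite, and V a diagonal matrix. Let λ₁ ≤ ... ≤ λₙ be the generalized eigenvalues of (W, A) and E₁ ≤ ... ≤ Eₙ the generalized eigenvalues of (W + A V, A). Then for every i, λᵢ + min_j V_jj ≤ Eᵢ ≤ λᵢ + max_j V_jj. -/
open Matrix


section EigShiftAux

variable {n : ℕ}

private lemma myDotSum {ι : Type*} (s : Finset ι) (f : ι → Fin n → ℝ) (v : Fin n → ℝ) :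
    v ⬝ᵥ (∑ k ∈ s, f k) = ∑ k ∈ s, v ⬝ᵥ f k := by
  simp only [dotProduct, Finset.sum_apply, Finset.mul_sum]
  exact Finset.sum_comm

private lemma mySumDot {ι : Type*} (s : Finset ι) (f : ι → Fin n → ℝ) (v : Fin n → ℝ) :
    (∑ k ∈ s, f k) ⬝ᵥ v = ∑ k ∈ s, f k ⬝ᵥ v := by
  simp only [dotProduct, Finset.sum_apply, Finset.sum_mul]
  exact Finset.sum_comm

private lemma myMulVecSum {ι : Type*} (s : Finset ι) (W : Matrix (Fin n) (Fin n) ℝ)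
    (f : ι → Fin n → ℝ) : W *ᵥ (∑ k ∈ s, f k) = ∑ k ∈ s, W *ᵥ f k := by
  ext j
  simp only [mulVec, dotProduct, Finset.sum_apply, Finset.mul_sum]
  exact Finset.sum_comm

private lemma gram_one (A : Matrix (Fin n) (Fin n) ℝ) (φ : Fin n → Fin n → ℝ)
    (hφON : ∀ i j, φ i ⬝ᵥ (A *ᵥ φ j) = if i = j then 1 else 0) :
    Matrix.of φ * (A * (Matrix.of φ)ᵀ) = 1 := by
  ext i j
  have := hφON i j
  simp only [dotProduct, mulVec, Matrix.mul_apply, Matrix.of_apply, transpose_apply,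
    Matrix.one_apply] at this ⊢
  rw [← this]

private lemma lin_indep (A : Matrix (Fin n) (Fin n) ℝ) (φ : Fin n → Fin n → ℝ)
    (hφON : ∀ i j, φ i ⬝ᵥ (A *ᵥ φ j) = if i = j then 1 else 0) :
    LinearIndependent ℝ φ := by
  rw [linearIndependent_iff']
  intro s g hg j hj
  have h := congrArg (fun v => v ⬝ᵥ (A *ᵥ φ j)) hg
  simp only [mySumDot, zero_dotProduct] at h
  rw [Finset.sum_congr rfl (fun k _ => by rw [smul_dotProduct, hφON k j, smul_eq_mul])] at h
  simpa [Finset.sum_ite_eq, hj] using h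

private lemma spectral_col (A W : Matrix (Fin n) (Fin n) ℝ) (lam : Fin n → ℝ)
    (φ : Fin n → Fin n → ℝ)
    (hφ : ∀ i, W *ᵥ φ i = lam i • (A *ᵥ φ i)) :
    W * (Matrix.of φ)ᵀ = A * (Matrix.of φ)ᵀ * Matrix.diagonal lam := by
  ext j k
  have := congrFun (hφ k) j
  simp only [Pi.smul_apply, smul_eq_mul] at this
  rw [Matrix.mul_diagonal]
  have e1 : (W * (Matrix.of φ)ᵀ) j k = (W *ᵥ φ k) j := by
    simp [Matrix.mul_apply, mulVec, dotProduct]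
  have e2 : (A * (Matrix.of φ)ᵀ) j k = (A *ᵥ φ k) j := by
    simp [Matrix.mul_apply, mulVec, dotProduct]
  rw [e1, e2, this, mul_comm]

private lemma sym_of (A W : Matrix (Fin n) (Fin n) ℝ) (hAt : Aᵀ = A) (lam : Fin n → ℝ)
    (φ : Fin n → Fin n → ℝ)
    (hφ : ∀ i, W *ᵥ φ i = lam i • (A *ᵥ φ i))
    (hφON : ∀ i j, φ i ⬝ᵥ (A *ᵥ φ j) = if i = j then 1 else 0) :
    Wᵀ = W := by
  set Φ := Matrix.of φ with hΦ
  have h1 : Φ * (A * Φᵀ) = 1 := gram_one A φ hφON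
  have h2 : (A * (Φᵀ * Φ)) = 1 := by rw [← Matrix.mul_assoc, mul_eq_one_comm.mp h1]
  have h3 : (Φᵀ * Φ) * A = 1 := mul_eq_one_comm.mp h2
  have hfac : W = A * Φᵀ * Matrix.diagonal lam * (Φ * A) := by
    calc W = W * ((Φᵀ * Φ) * A) := by rw [h3, Matrix.mul_one]
      _ = (W * Φᵀ) * (Φ * A) := by noncomm_ring
      _ = A * Φᵀ * Matrix.diagonal lam * (Φ * A) := by rw [spectral_col A W lam φ hφ]
  rw [hfac]
  simp only [Matrix.transpose_mul, Matrix.diagonal_transpose, Matrix.transpose_transpose, hAt]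
  noncomm_ring

private lemma quad (A W : Matrix (Fin n) (Fin n) ℝ) (lam : Fin n → ℝ) (φ : Fin n → Fin n → ℝ)
    (hφ : ∀ i, W *ᵥ φ i = lam i • (A *ᵥ φ i))
    (hφON : ∀ i j, φ i ⬝ᵥ (A *ᵥ φ j) = if i = j then 1 else 0)
    {ι : Type*} [Fintype ι] [DecidableEq ι] (e : ι → Fin n) (he : Function.Injective e)
    (a : ι → ℝ) :
    (∑ k, a k • φ (e k)) ⬝ᵥ (W *ᵥ (∑ k, a k • φ (e k))) = ∑ k, a k ^ 2 * lam (e k) := by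
  have h1 : W *ᵥ (∑ k, a k • φ (e k)) = ∑ k, (a k * lam (e k)) • (A *ᵥ φ (e k)) := by
    rw [myMulVecSum]
    refine Finset.sum_congr rfl fun k _ => ?_
    rw [mulVec_smul, hφ, smul_smul]
  rw [h1, mySumDot]
  have h2 : ∀ l, (a l • φ (e l)) ⬝ᵥ (∑ k, (a k * lam (e k)) • (A *ᵥ φ (e k)))
      = a l ^ 2 * lam (e l) := by
    intro l
    rw [myDotSum]
    have h3 : ∀ k, (a l • φ (e l)) ⬝ᵥ ((a k * lam (e k)) • (A *ᵥ φ (e k)))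
        = if l = k then a l * (a k * lam (e k)) else 0 := by
      intro k
      rw [smul_dotProduct, dotProduct_smul]
      simp only [hφON, he.eq_iff, smul_eq_mul, mul_ite, mul_one, mul_zero]
    rw [Finset.sum_congr rfl fun k _ => h3 k]
    simp [Finset.sum_ite_eq]
    ring
  rw [Finset.sum_congr rfl fun l _ => h2 l]

private lemma vbound (A : Matrix (Fin n) (Fin n) ℝ) (hA : A.PosDef)
    (d : Fin n → ℝ) (c : ℝ) (hc : ∀ j, d j ≤ c)
    (hcomm : ∀ j k, A j k * d k = d j * A j k) (x : Fin n → ℝ) :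
    x ⬝ᵥ ((A * Matrix.diagonal d) *ᵥ x) ≤ c * (x ⬝ᵥ (A *ᵥ x)) := by
  set z : Fin n → ℝ := fun j => Real.sqrt (c - d j) * x j with hz
  have key : ∀ j k, x j * (A j k * ((c - d k) * x k)) = z j * (A j k * z k) := by
    intro j k
    rcases eq_or_ne (A j k) 0 with h | h
    · simp [h]
    · have hdk : c - d k = c - d j := by
        have h2 := hcomm j k
        have : A j k * (c - d k) = A j k * (c - d j) := by ring_nf; linarith [h2]
        exact mul_left_cancel₀ h this
      simp only [hz]
      rw [hdk]
      have hs : Real.sqrt (c - d j) * Real.sqrt (c - d j) = c - d j :=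
        Real.mul_self_sqrt (by linarith [hc j])
      linear_combination (x j * A j k * x k) * hs.symm
  have lhs1 : x ⬝ᵥ (A *ᵥ x) = ∑ j, ∑ k, x j * (A j k * x k) := by
    simp [dotProduct, mulVec, Finset.mul_sum]
  have lhs2 : x ⬝ᵥ ((A * Matrix.diagonal d) *ᵥ x) = ∑ j, ∑ k, x j * (A j k * (d k * x k)) := by
    simp [dotProduct, mulVec, Matrix.mul_diagonal, Finset.mul_sum, mul_assoc]
  have rhs : z ⬝ᵥ (A *ᵥ z) = ∑ j, ∑ k, z j * (A j k * z k) := by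
    simp [dotProduct, mulVec, Finset.mul_sum]
  have hexp : c * (x ⬝ᵥ (A *ᵥ x)) - x ⬝ᵥ ((A * Matrix.diagonal d) *ᵥ x) = z ⬝ᵥ (A *ᵥ z) := by
    rw [lhs1, lhs2, rhs, Finset.mul_sum, ← Finset.sum_sub_distrib]
    refine Finset.sum_congr rfl fun j _ => ?_
    rw [Finset.mul_sum, ← Finset.sum_sub_distrib]
    refine Finset.sum_congr rfl fun k _ => ?_
    linear_combination key j k
  have hpsd : 0 ≤ z ⬝ᵥ (A *ᵥ z) := by
    have := hA.posSemidef.dotProduct_mulVec_nonneg z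
    simpa using this
  linarith [hexp]

private lemma key_bound (A W : Matrix (Fin n) (Fin n) ℝ) (hA : A.PosDef)
    (d : Fin n → ℝ) (c : ℝ) (hc : ∀ j, d j ≤ c)
    (lam E : Fin n → ℝ) (φ ψ : Fin n → (Fin n → ℝ))
    (hlam : Monotone lam) (hE : Monotone E)
    (hφ : ∀ i, W *ᵥ φ i = lam i • (A *ᵥ φ i))
    (hψ : ∀ i, (W + A * Matrix.diagonal d) *ᵥ ψ i = E i • (A *ᵥ ψ i))
    (hφON : ∀ i j, φ i ⬝ᵥ (A *ᵥ φ j) = if i = j then 1 else 0)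
    (hψON : ∀ i j, ψ i ⬝ᵥ (A *ᵥ ψ j) = if i = j then 1 else 0)
    (i : Fin n) : E i ≤ lam i + c := by
  have hAt : Aᵀ = A := by
    have := hA.1
    simpa [Matrix.IsHermitian] using this
  set M := W + A * Matrix.diagonal d with hM
  have hWt : Wᵀ = W := sym_of A W hAt lam φ hφ hφON
  have hMt : Mᵀ = M := sym_of A M hAt E ψ hψ hψON
  have hADt : (A * Matrix.diagonal d)ᵀ = A * Matrix.diagonal d := by
    have hAD : A * Matrix.diagonal d = M - W := by rw [hM, add_sub_cancel_left]
    rw [hAD, Matrix.transpose_sub, hMt, hWt]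
  have hcomm : ∀ j k, A j k * d k = d j * A j k := by
    intro j k
    have h4 : Matrix.diagonal d * A = A * Matrix.diagonal d := by
      calc Matrix.diagonal d * A = (A * Matrix.diagonal d)ᵀ := by
            rw [Matrix.transpose_mul, Matrix.diagonal_transpose, hAt]
        _ = _ := hADt
    have := congrFun (congrFun h4 j) k
    simp only [Matrix.diagonal_mul, Matrix.mul_diagonal] at this
    linarith [this]
  -- intersection of spans
  set S1 := Submodule.span ℝ (Set.range fun k : ↥(Finset.Iic i) => φ k.1) with hS1
  set S2 := Submodule.span ℝ (Set.range fun k : ↥(Finset.Ici i) => ψ k.1) with hS2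
  have li1 : LinearIndependent ℝ (fun k : ↥(Finset.Iic i) => φ k.1) :=
    (lin_indep A φ hφON).comp Subtype.val Subtype.val_injective
  have li2 : LinearIndependent ℝ (fun k : ↥(Finset.Ici i) => ψ k.1) :=
    (lin_indep A ψ hψON).comp Subtype.val Subtype.val_injective
  have hr1 : Module.finrank ℝ S1 = i.1 + 1 := by
    rw [hS1, finrank_span_eq_card li1, Fintype.card_coe, Fin.card_Iic]
  have hr2 : Module.finrank ℝ S2 = n - i.1 := by
    rw [hS2, finrank_span_eq_card li2, Fintype.card_coe, Fin.card_Ici]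
  have hsum := Submodule.finrank_sup_add_finrank_inf_eq S1 S2
  have hsup : Module.finrank ℝ ↥(S1 ⊔ S2) ≤ n := by
    have := Submodule.finrank_le (S1 ⊔ S2)
    simpa [Module.finrank_fin_fun] using this
  have hpos : 0 < Module.finrank ℝ ↥(S1 ⊓ S2) := by
    have hi := i.isLt
    omega
  obtain ⟨⟨x, hx⟩, hx0'⟩ := Module.finrank_pos_iff_exists_ne_zero.mp hpos
  have hx0 : x ≠ 0 := by simpa [Submodule.mk_eq_zero] using hx0'
  have hx1 : x ∈ S1 := hx.1
  have hx2 : x ∈ S2 := hx.2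
  obtain ⟨a, ha⟩ := (Submodule.mem_span_range_iff_exists_fun ℝ).mp hx1
  obtain ⟨b, hb⟩ := (Submodule.mem_span_range_iff_exists_fun ℝ).mp hx2
  set q := x ⬝ᵥ (A *ᵥ x) with hq
  have hAeig : ∀ j, A *ᵥ φ j = (fun _ : Fin n => (1:ℝ)) j • (A *ᵥ φ j) := by simp
  have hAeig' : ∀ j, A *ᵥ ψ j = (fun _ : Fin n => (1:ℝ)) j • (A *ᵥ ψ j) := by simp
  have hqa : q = ∑ k : ↥(Finset.Iic i), a k ^ 2 := by
    rw [hq, ← ha]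
    simpa using quad A A (fun _ => 1) φ hAeig hφON Subtype.val Subtype.val_injective a
  have hqb : q = ∑ k : ↥(Finset.Ici i), b k ^ 2 := by
    rw [hq, ← hb]
    simpa using quad A A (fun _ => 1) ψ hAeig' hψON Subtype.val Subtype.val_injective b
  have hq0 : 0 < q := by
    have := hA.dotProduct_mulVec_pos hx0
    simpa [hq] using this
  have hxW : x ⬝ᵥ (W *ᵥ x) ≤ lam i * q := by
    rw [← ha, quad A W lam φ hφ hφON Subtype.val Subtype.val_injective a]
    have hstep : ∀ k : ↥(Finset.Iic i), a k ^ 2 * lam k.1 ≤ a k ^ 2 * lam i := by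
      intro k
      exact mul_le_mul_of_nonneg_left (hlam (Finset.mem_Iic.mp k.2)) (sq_nonneg _)
    calc ∑ k : ↥(Finset.Iic i), a k ^ 2 * lam k.1
        ≤ ∑ k : ↥(Finset.Iic i), a k ^ 2 * lam i := Finset.sum_le_sum fun k _ => hstep k
      _ = lam i * q := by rw [← Finset.sum_mul, mul_comm, hqa]
  have hxM : E i * q ≤ x ⬝ᵥ (M *ᵥ x) := by
    rw [← hb, quad A M E ψ hψ hψON Subtype.val Subtype.val_injective b]
    have hstep : ∀ k : ↥(Finset.Ici i), b k ^ 2 * E i ≤ b k ^ 2 * E k.1 := by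
      intro k
      exact mul_le_mul_of_nonneg_left (hE (Finset.mem_Ici.mp k.2)) (sq_nonneg _)
    calc E i * q = ∑ k : ↥(Finset.Ici i), b k ^ 2 * E i := by
          rw [← Finset.sum_mul, mul_comm, hqb]
      _ ≤ ∑ k : ↥(Finset.Ici i), b k ^ 2 * E k.1 := Finset.sum_le_sum fun k _ => hstep k
  have hxAV : x ⬝ᵥ ((A * Matrix.diagonal d) *ᵥ x) ≤ c * q :=
    vbound A hA d c hc hcomm x
  have hsplit : x ⬝ᵥ (M *ᵥ x) = x ⬝ᵥ (W *ᵥ x) + x ⬝ᵥ ((A * Matrix.diagonal d) *ᵥ x) := by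
    rw [hM, Matrix.add_mulVec, dotProduct_add]
  have hfin : E i * q ≤ (lam i + c) * q := by
    have : (lam i + c) * q = lam i * q + c * q := by ring
    rw [this]
    linarith
  exact (mul_le_mul_iff_of_pos_right hq0).mp hfin

end EigShiftAux

/-- Discrete eigenvalue-shift bound: if `λ₁ ≤ ... ≤ λₙ` are the generalized
eigenvalues of `(W, A)` (with `A`-orthonormal eigenvectors `φ`) and
`E₁ ≤ ... ≤ Eₙ` those of `(W + A V, A)` (with eigenvectors `ψ`), `W` PSD,
`A` PD symmetric and `V` diagonal, then
`λᵢ + min_j V_jj ≤ Eᵢ ≤ λᵢ + max_j V_jj`. -/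
theorem hamiltonian_eigenvalue_bounds (n : ℕ) (hn : 0 < n)
    (W A V : Matrix (Fin n) (Fin n) ℝ)
    (hW : W.PosSemidef) (hA : A.PosDef) (hV : V.IsDiag)
    (lam E : Fin n → ℝ) (φ ψ : Fin n → (Fin n → ℝ))
    (hlam : Monotone lam) (hE : Monotone E)
    (hφ : ∀ i, W *ᵥ φ i = lam i • (A *ᵥ φ i))
    (hψ : ∀ i, (W + A * V) *ᵥ ψ i = E i • (A *ᵥ ψ i))
    (hφON : ∀ i j, φ i ⬝ᵥ (A *ᵥ φ j) = if i = j then 1 else 0)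
    (hψON : ∀ i j, ψ i ⬝ᵥ (A *ᵥ ψ j) = if i = j then 1 else 0) :
    ∀ i, lam i + (⨅ j, V j j) ≤ E i ∧ E i ≤ lam i + (⨆ j, V j j) := by
  have hnemp : Nonempty (Fin n) := ⟨⟨0, hn⟩⟩
  have hVd : Matrix.diagonal (fun j => V j j) = V := by
    ext a b
    rcases eq_or_ne a b with h | h
    · simp [h]
    · simp [Matrix.diagonal_apply_ne _ h, hV h]
  intro i
  constructor
  · -- lower bound
    have hφ' : ∀ j, ((W + A * V) + A * Matrix.diagonal (fun k => -(V k k))) *ᵥ φ j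
        = lam j • (A *ᵥ φ j) := by
      intro j
      have : (W + A * V) + A * Matrix.diagonal (fun k => -(V k k)) = W := by
        have : Matrix.diagonal (fun k => -(V k k)) = -V := by
          rw [← hVd]
          ext a b
          simp only [Matrix.diagonal_apply, Matrix.neg_apply]
          split <;> simp
        rw [this, Matrix.mul_neg]
        abel
      rw [this]
      exact hφ j
    have hc : ∀ j, -(V j j) ≤ -(⨅ k, V k k) := by
      intro j
      have : (⨅ k, V k k) ≤ V j j :=
        ciInf_le (Set.Finite.bddBelow (Set.finite_range _)) j
      linarith
    have := key_bound A (W + A * V) hA (fun k => -(V k k)) (-(⨅ k, V k k)) hc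
      E lam ψ φ hE hlam hψ hφ' hψON hφON i
    linarith
  · -- upper bound
    have hψ' : ∀ j, (W + A * Matrix.diagonal (fun k => V k k)) *ᵥ ψ j
        = E j • (A *ᵥ ψ j) := by
      intro j
      rw [hVd]
      exact hψ j
    have hc : ∀ j, V j j ≤ ⨆ k, V k k := fun j =>
      le_ciSup (f := fun k => V k k) (Set.Finite.bddAbove (Set.finite_range _)) j
    exact key_bound A W hA (fun k => V k k) (⨆ k, V k k) hc
      lam E φ ψ hlam hE hφ hψ' hφON hψON i
end

section
/- Optimality of the Hamiltonian eigenspace: let H = -Δ + V with V ≥ 0 on a compact manifold M, with eigenpairs {ψᵢ, Eᵢ} ordered increasingly and E_{n+1} > 0. There is no 0 ≤ α < 1, integer n, and sequence of linearly independent functions {φᵢ} in L²(M) such that for all f in the form domain, ‖f − Σ_{i=1}^n ⟨f, φᵢ⟩ φᵢ‖² ≤ α (‖∇f‖² + ‖√V f‖²) / E_{n+1}. -/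
open scoped RealInnerProductSpace

/-- Optimality of the Hamiltonian eigenspace (finite-dimensional version):
for a positive semidefinite symmetric operator `H` with orthonormal
eigenbasis `ψᵢ` and increasingly ordered eigenvalues `Eᵢ ≥ 0`, there is no
`0 ≤ α < 1`, no `n` with `E_{n+1} > 0`, and no linearly independent family
`{φᵢ}` such that `‖f − Σ_{i<n} ⟨f,φᵢ⟩φᵢ‖² ≤ α ⟨Hf,f⟩ / E_{n+1}` for all
`f`. (For `H = -Δ + V`, `⟨Hf,f⟩ = ‖∇f‖² + ‖√V f‖²`.) -/
theorem hamiltonian_eigenspace_optimality (N : ℕ)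
    (H : EuclideanSpace ℝ (Fin N) →ₗ[ℝ] EuclideanSpace ℝ (Fin N))
    (hsym : LinearMap.IsSymmetric H)
    (E : Fin N → ℝ) (ψ : Fin N → EuclideanSpace ℝ (Fin N))
    (hON : Orthonormal ℝ ψ) (hE : Monotone E) (hEpos : ∀ i, 0 ≤ E i)
    (heig : ∀ i, H (ψ i) = E i • ψ i) :
    ¬ ∃ (α : ℝ) (n : ℕ) (hn : n < N)
        (φ : Fin N → EuclideanSpace ℝ (Fin N)),
      0 ≤ α ∧ α < 1 ∧ 0 < E ⟨n, hn⟩ ∧ LinearIndependent ℝ φ ∧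
      ∀ f : EuclideanSpace ℝ (Fin N),
        ‖f - ∑ i ∈ Finset.univ.filter (fun i : Fin N => (i : ℕ) < n),
            ⟪f, φ i⟫ • φ i‖ ^ 2 ≤ α * ⟪H f, f⟫ / E ⟨n, hn⟩ := by
  rintro ⟨α, n, hn, φ, hα0, hα1, hEn, hli, hbound⟩
  have hle : n + 1 ≤ N := hn
  set e : Fin (n+1) → Fin N := Fin.castLE hle with he
  have hONe : Orthonormal ℝ (fun j => ψ (e j)) :=
    hON.comp e (Fin.castLE_injective hle)
  -- The constraint map
  let T : (Fin (n+1) → ℝ) →ₗ[ℝ] (Fin n → ℝ) :=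
    LinearMap.pi (fun i : Fin n =>
      { toFun := fun c => ∑ j, c j * ⟪ψ (e j), φ (Fin.castLE hn.le i)⟫
        map_add' := by
          intro x y
          simp [add_mul, Finset.sum_add_distrib]
        map_smul' := by
          intro m x
          simp [Finset.mul_sum, mul_assoc] })
  have hTnotinj : ¬ Function.Injective T := by
    intro h
    have := LinearMap.finrank_le_finrank_of_injective h
    simp [Module.finrank_fintype_fun_eq_card] at this
  rw [← LinearMap.ker_eq_bot] at hTnotinj
  obtain ⟨c, hcker, hc0⟩ := (Submodule.ne_bot_iff _).1 hTnotinj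
  have hTc : T c = 0 := hcker
  set f : EuclideanSpace ℝ (Fin N) := ∑ j, c j • ψ (e j) with hf
  have hfne : f ≠ 0 := by
    intro h0
    exact hc0 (funext fun j => (Fintype.linearIndependent_iff.1
      hONe.linearIndependent c h0) j)
  -- projection terms vanish
  have hproj : ∀ i ∈ Finset.univ.filter (fun i : Fin N => (i : ℕ) < n),
      ⟪f, φ i⟫ • φ i = (0 : EuclideanSpace ℝ (Fin N)) := by
    intro i hi
    have hi' : (i : ℕ) < n := by simpa using hi
    have hieq : φ (Fin.castLE hn.le ⟨i.1, hi'⟩) = φ i := rfl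
    have : ⟪f, φ i⟫ = 0 := by
      have hcomp := congrFun hTc ⟨i.1, hi'⟩
      simp only [T, LinearMap.pi_apply, LinearMap.coe_mk, AddHom.coe_mk,
        Pi.zero_apply, hieq] at hcomp
      rw [hf, sum_inner]
      simp_rw [real_inner_smul_left]
      exact hcomp
    simp [this]
  have hsumzero : (∑ i ∈ Finset.univ.filter (fun i : Fin N => (i : ℕ) < n),
      ⟪f, φ i⟫ • φ i) = 0 := Finset.sum_eq_zero hproj
  -- norms
  have hnorm : ‖f‖ ^ 2 = ∑ j, c j * c j := by
    rw [← real_inner_self_eq_norm_sq, hf, hONe.inner_sum]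
    simp
  have hHf : ⟪H f, f⟫ = ∑ j, (c j * E (e j)) * c j := by
    have : H f = ∑ j, (c j * E (e j)) • ψ (e j) := by
      rw [hf, map_sum]
      congr 1
      ext j
      rw [map_smul, heig, smul_smul]
    rw [this, hf, hONe.inner_sum]
    simp
  have hEle : ∀ j : Fin (n+1), E (e j) ≤ E ⟨n, hn⟩ := by
    intro j
    apply hE
    exact Fin.mk_le_mk.2 (Nat.lt_succ_iff.1 j.2)
  have hHle : ⟪H f, f⟫ ≤ E ⟨n, hn⟩ * ‖f‖ ^ 2 := by
    rw [hHf, hnorm, Finset.mul_sum]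
    apply Finset.sum_le_sum
    intro j _
    have h1 : 0 ≤ c j * c j := mul_self_nonneg _
    nlinarith [hEle j]
  have hb := hbound f
  rw [hsumzero, sub_zero] at hb
  have hfpos : 0 < ‖f‖ ^ 2 := pow_pos (norm_pos_iff.2 hfne) 2
  have h2 : α * ⟪H f, f⟫ / E ⟨n, hn⟩ ≤ α * ‖f‖ ^ 2 := by
    rw [div_le_iff₀ hEn]
    nlinarith [hHle]
  nlinarith
end
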